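/- Deciding, for a mixed 1D crease pattern, whether there exists a valid assignment (an extension of the partial M/V labels to all creases making every suspicious interval innocent) can be done by a greedy algorithm that processes suspicious intervals in order of minimality: formally, if I is a minimal suspicious interval (containing no not-yet-fully-assigned smaller suspicious interval) and the partial assignment A extends to some valid full assignment, then A can be extended on I by any balanced completion (making mountain and valley counts in I equal if |I| is even, or leaving one crease free/forced if |I| is odd as specified) while preserving extendability to a valid full assignment. -/

import Mathlib

open Finset

/-- A 1D crease pattern: paper `[0, L]` with creases `c 0 < c 1 < ⋯ < c (n-1)`
strictly inside the paper. -/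
structure CreasePattern1D where
  L : ℝ
  n : ℕ
  c : Fin n → ℝ
  mono : StrictMono c
  pos : ∀ i, 0 < c i
  lt_len : ∀ i, c i < L

namespace CreasePattern1D

variable (P : CreasePattern1D)

/-- The folded-state map: `f x = x` on the first segment, and the slope flips
sign at every crease (alternating reflection). -/
noncomputable def foldMap (x : ℝ) : ℝ :=
  (-1 : ℝ) ^ ((univ.filter fun i => P.c i ≤ x)).card * x
    + 2 * ∑ i ∈ univ.filter (fun i => P.c i ≤ x), (-1 : ℝ) ^ (i : ℕ) * P.c i

/-- Vertex `j` of the pattern: `pt 0 = 0` (left end), `pt (j) = c (j-1)` for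
`1 ≤ j ≤ n`, and `pt j = L` (right end) for `j ≥ n+1`. -/
noncomputable def pt (j : ℕ) : ℝ :=
  if j = 0 then 0 else if h : j - 1 < P.n then P.c ⟨j - 1, h⟩ else P.L

/-- The interval between creases `p ≤ q` is *suspicious* if the folded images of
the far endpoints of its two flaps both lie strictly outside the folded image of
the interval. -/
def Suspicious (p q : Fin P.n) : Prop :=
  p ≤ q ∧
  P.foldMap (P.pt (p : ℕ)) ∉ P.foldMap '' Set.Icc (P.c p) (P.c q) ∧
  P.foldMap (P.pt ((q : ℕ) + 2)) ∉ P.foldMap '' Set.Icc (P.c p) (P.c q)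

/-- Number of mountain creases in the closed interval `[c p, c q]`
(`a i = true` means crease `i` is a mountain). -/
def countM (a : Fin P.n → Bool) (p q : Fin P.n) : ℕ :=
  ((univ : Finset (Fin P.n)).filter fun i => p ≤ i ∧ i ≤ q ∧ a i = true).card

/-- Number of valley creases in the closed interval `[c p, c q]`. -/
def countV (a : Fin P.n → Bool) (p q : Fin P.n) : ℕ :=
  ((univ : Finset (Fin P.n)).filter fun i => p ≤ i ∧ i ≤ q ∧ a i = false).card

/-- An interval is *innocent* if its mountain and valley counts differ by at
most one. -/
def Innocent (a : Fin P.n → Bool) (p q : Fin P.n) : Prop :=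
  (P.countM a p q : ℤ) - P.countV a p q ≤ 1 ∧
  (P.countV a p q : ℤ) - P.countM a p q ≤ 1

/-- Every suspicious interval is innocent. -/
def AllInnocent (a : Fin P.n → Bool) : Prop :=
  ∀ p q : Fin P.n, P.Suspicious p q → P.Innocent a p q

end CreasePattern1D

namespace CreasePattern1D

variable (P : CreasePattern1D)

/-- Number of creases in `[c p, c q]` assigned the label `b` by the partial
assignment `B`. -/
def cntLbl (B : Fin P.n → Option Bool) (p q : Fin P.n) (b : Bool) : ℕ :=
  ((univ : Finset (Fin P.n)).filter fun i => p ≤ i ∧ i ≤ q ∧ B i = some b).card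

/-- Number of creases in `[c p, c q]` left unassigned by the partial
assignment `B`. -/
def cntNone (B : Fin P.n → Option Bool) (p q : Fin P.n) : ℕ :=
  ((univ : Finset (Fin P.n)).filter fun i => p ≤ i ∧ i ≤ q ∧ B i = none).card

end CreasePattern1D

/-- A full assignment `B` extends the partial (mixed) assignment `asg`. -/
def ExtendsPartial {n : ℕ} (asg : Fin n → Option Bool) (B : Fin n → Bool) : Prop :=
  ∀ i b, asg i = some b → B i = b


namespace GreedyAux

variable {n : ℕ}

/-- Number of creases in `[p,q]` with label `b` under full assignment `a`. -/
def cnt (a : Fin n → Bool) (p q : Fin n) (b : Bool) : ℕ :=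
  ((univ : Finset (Fin n)).filter fun i => p ≤ i ∧ i ≤ q ∧ a i = b).card

/-- Completion of the partial assignment `A'` using `B` outside `[p,q]` and
the default value `d` on unassigned creases inside `[p,q]`. -/
def comp (A' : Fin n → Option Bool) (B : Fin n → Bool) (p q : Fin n) (d : Bool)
    (i : Fin n) : Bool :=
  (A' i).elim (if p ≤ i ∧ i ≤ q then d else B i) (fun b => b)

lemma comp_some {A' : Fin n → Option Bool} {B : Fin n → Bool} {p q : Fin n} {d : Bool}
    {i : Fin n} {b : Bool} (h : A' i = some b) : comp A' B p q d i = b := by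
  simp [comp, h]

lemma comp_out {A' : Fin n → Option Bool} {B : Fin n → Bool} {p q : Fin n} {d : Bool}
    {i : Fin n} (h : A' i = none) (h2 : ¬ (p ≤ i ∧ i ≤ q)) : comp A' B p q d i = B i := by
  simp [comp, h, h2]

lemma comp_in {A' : Fin n → Option Bool} {B : Fin n → Bool} {p q : Fin n} {d : Bool}
    {i : Fin n} (h : A' i = none) (h1 : p ≤ i) (h2 : i ≤ q) : comp A' B p q d i = d := by
  simp [comp, h, h1, h2]

lemma cnt_congr {a a' : Fin n → Bool} {p q : Fin n} (b : Bool)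
    (h : ∀ i, p ≤ i → i ≤ q → a i = a' i) : cnt a p q b = cnt a' p q b := by
  unfold cnt
  congr 1
  apply filter_congr
  intro i _
  constructor
  · rintro ⟨h1, h2, h3⟩; exact ⟨h1, h2, by rw [← h i h1 h2]; exact h3⟩
  · rintro ⟨h1, h2, h3⟩; exact ⟨h1, h2, by rw [h i h1 h2]; exact h3⟩

lemma cnt_add (a : Fin n → Bool) (p q : Fin n) :
    cnt a p q true + cnt a p q false
      = ((univ : Finset (Fin n)).filter fun i => p ≤ i ∧ i ≤ q).card := by
  classical
  have h := Finset.card_filter_add_card_filter_not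
    (s := (univ : Finset (Fin n)).filter fun i => p ≤ i ∧ i ≤ q)
    (p := fun i => a i = true)
  rw [filter_filter, filter_filter] at h
  unfold cnt
  rw [← h]
  congr 2 <;> · apply filter_congr; intro i _; simp [and_assoc]

lemma card_between {p q : Fin n} (hpq : p ≤ q) :
    ((univ : Finset (Fin n)).filter fun i => p ≤ i ∧ i ≤ q).card = (q : ℕ) - p + 1 := by
  have e : ((univ : Finset (Fin n)).filter fun i => p ≤ i ∧ i ≤ q) = Finset.Icc p q := by
    ext i; simp [Finset.mem_Icc]
  rw [e, Fin.card_Icc]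
  have : (p : ℕ) ≤ q := hpq
  omega

lemma cnt_comp (A' : Fin n → Option Bool) (B : Fin n → Bool) (p q : Fin n) (d b : Bool) :
    cnt (comp A' B p q d) p q b
      = ((univ : Finset (Fin n)).filter fun i => p ≤ i ∧ i ≤ q ∧ A' i = some b).card
        + (if d = b then
            ((univ : Finset (Fin n)).filter fun i => p ≤ i ∧ i ≤ q ∧ A' i = none).card
          else 0) := by
  classical
  have h := Finset.card_filter_add_card_filter_not
    (s := (univ : Finset (Fin n)).filter fun i => p ≤ i ∧ i ≤ q ∧ comp A' B p q d i = b)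
    (p := fun i => A' i = none)
  rw [filter_filter, filter_filter] at h
  have e_neg : ((univ : Finset (Fin n)).filter fun i =>
        (p ≤ i ∧ i ≤ q ∧ comp A' B p q d i = b) ∧ ¬ A' i = none)
      = (univ : Finset (Fin n)).filter fun i => p ≤ i ∧ i ≤ q ∧ A' i = some b := by
    ext i
    simp only [mem_filter, mem_univ, true_and]
    constructor
    · rintro ⟨⟨h1, h2, h3⟩, h4⟩
      refine ⟨h1, h2, ?_⟩
      cases hA : A' i with
      | none => exact absurd hA h4
      | some c => rw [comp_some hA] at h3; rw [h3]
    · rintro ⟨h1, h2, h3⟩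
      exact ⟨⟨h1, h2, comp_some h3⟩, by simp [h3]⟩
  have e_pos : ((univ : Finset (Fin n)).filter fun i =>
        (p ≤ i ∧ i ≤ q ∧ comp A' B p q d i = b) ∧ A' i = none)
      = if d = b then
          (univ : Finset (Fin n)).filter (fun i => p ≤ i ∧ i ≤ q ∧ A' i = none)
        else ∅ := by
    by_cases hdb : d = b
    · subst hdb
      rw [if_pos rfl]
      ext i
      simp only [mem_filter, mem_univ, true_and]
      constructor
      · rintro ⟨⟨h1, h2, _⟩, h4⟩; exact ⟨h1, h2, h4⟩
      · rintro ⟨h1, h2, h3⟩; exact ⟨⟨h1, h2, comp_in h3 h1 h2⟩, h3⟩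
    · rw [if_neg hdb]
      ext i
      simp only [mem_filter, mem_univ, true_and, Finset.notMem_empty, iff_false]
      rintro ⟨⟨h1, h2, h3⟩, h4⟩
      rw [comp_in h4 h1 h2] at h3
      exact hdb h3
  rw [e_neg, e_pos] at h
  unfold cnt
  rw [← h]
  by_cases hdb : d = b
  · rw [if_pos hdb, if_pos hdb]; omega
  · rw [if_neg hdb, if_neg hdb]; simp

lemma cnt_local {a a' : Fin n → Bool} {p q p' q' : Fin n} (b : Bool)
    (hout : ∀ i, ¬ (p ≤ i ∧ i ≤ q) → a i = a' i)
    (hin : cnt a p q b = cnt a' p q b) (hp : p' ≤ p) (hq : q ≤ q') :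
    cnt a p' q' b = cnt a' p' q' b := by
  classical
  have split : ∀ f : Fin n → Bool, cnt f p' q' b
      = cnt f p q b + ((univ : Finset (Fin n)).filter fun i =>
          (p' ≤ i ∧ i ≤ q' ∧ f i = b) ∧ ¬ (p ≤ i ∧ i ≤ q)).card := by
    intro f
    have h := Finset.card_filter_add_card_filter_not
      (s := (univ : Finset (Fin n)).filter fun i => p' ≤ i ∧ i ≤ q' ∧ f i = b)
      (p := fun i => p ≤ i ∧ i ≤ q)
    rw [filter_filter, filter_filter] at h
    have e : ((univ : Finset (Fin n)).filter fun i =>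
          (p' ≤ i ∧ i ≤ q' ∧ f i = b) ∧ (p ≤ i ∧ i ≤ q))
        = (univ : Finset (Fin n)).filter fun i => p ≤ i ∧ i ≤ q ∧ f i = b := by
      ext i
      simp only [mem_filter, mem_univ, true_and]
      constructor
      · rintro ⟨⟨_, _, h3⟩, h4, h5⟩; exact ⟨h4, h5, h3⟩
      · rintro ⟨h1, h2, h3⟩; exact ⟨⟨hp.trans h1, h2.trans hq, h3⟩, h1, h2⟩
    rw [e] at h
    unfold cnt
    omega
  rw [split a, split a', hin]
  congr 1
  congr 1
  apply filter_congr
  intro i _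
  constructor
  · rintro ⟨⟨h1, h2, h3⟩, h4⟩; exact ⟨⟨h1, h2, by rw [← hout i h4]; exact h3⟩, h4⟩
  · rintro ⟨⟨h1, h2, h3⟩, h4⟩; exact ⟨⟨h1, h2, by rw [hout i h4]; exact h3⟩, h4⟩

lemma susp_inter {P : CreasePattern1D} {p q p' q' : Fin P.n}
    (h : P.Suspicious p q) (h' : P.Suspicious p' q') (hrs : p ⊔ p' ≤ q ⊓ q') :
    P.Suspicious (p ⊔ p') (q ⊓ q') := by
  refine ⟨hrs, ?_, ?_⟩
  · rcases le_total p' p with hc | hc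
    · rw [sup_eq_left.mpr hc]
      intro hx
      exact h.2.1 (Set.image_mono (Set.Icc_subset_Icc le_rfl
        (P.mono.monotone (inf_le_left (a := q) (b := q')))) hx)
    · rw [sup_eq_right.mpr hc]
      intro hx
      exact h'.2.1 (Set.image_mono (Set.Icc_subset_Icc le_rfl
        (P.mono.monotone (inf_le_right (a := q) (b := q')))) hx)
  · rcases le_total q q' with hc | hc
    · rw [inf_eq_left.mpr hc]
      intro hx
      exact h.2.2 (Set.image_mono (Set.Icc_subset_Icc
        (P.mono.monotone (le_sup_left (a := p) (b := p'))) le_rfl) hx)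
    · rw [inf_eq_right.mpr hc]
      intro hx
      exact h'.2.2 (Set.image_mono (Set.Icc_subset_Icc
        (P.mono.monotone (le_sup_right (a := p) (b := p'))) le_rfl) hx)

end GreedyAux

/-- Greedy step of the algorithm for mixed 1D crease
patterns.  Let `[c p, c q]` be a *minimal* suspicious interval: every strictly
smaller suspicious interval contained in it is already fully assigned by the
partial assignment `asg`.  Suppose `asg` extends to a valid full assignment
(one making every suspicious interval innocent).  Let `A'` be any *balanced
completion* of `asg` on the interval: `A'` agrees with `asg` outside the
interval and extends it inside; if the interval has an even number `2k` of
creases then `A'` fully assigns it with `k` mountains and `k` valleys; if it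
has an odd number `2k+1` of creases then either `A'` leaves exactly one crease
unassigned and assigns `k` mountains and `k` valleys, or (when some sign
already had `k+1` creases assigned by `asg`) `A'` is the unique full assignment
of the interval making it innocent.  Then `A'` still extends to a valid full
assignment. -/
theorem greedy_balanced_completion_preserves_validity (P : CreasePattern1D)
    (asg A' : Fin P.n → Option Bool) (p q : Fin P.n)
    (hsus : P.Suspicious p q)
    (hmin : ∀ p' q' : Fin P.n, P.Suspicious p' q' → p ≤ p' → q' ≤ q →
      ¬ (p' = p ∧ q' = q) → ∀ i : Fin P.n, p' ≤ i → i ≤ q' → (asg i).isSome)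
    (hext : ∃ B : Fin P.n → Bool, ExtendsPartial asg B ∧ P.AllInnocent B)
    (houtside : ∀ i : Fin P.n, ¬ (p ≤ i ∧ i ≤ q) → A' i = asg i)
    (hextend : ∀ i : Fin P.n, ∀ b : Bool, asg i = some b → A' i = some b)
    (hbal :
      (Even ((q : ℕ) - (p : ℕ) + 1) →
        P.cntNone A' p q = 0 ∧ P.cntLbl A' p q true = P.cntLbl A' p q false) ∧
      (¬ Even ((q : ℕ) - (p : ℕ) + 1) →
        (P.cntNone A' p q = 1 ∧ P.cntLbl A' p q true = P.cntLbl A' p q false) ∨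
        (P.cntNone A' p q = 0 ∧ ∃ b : Bool,
          2 * P.cntLbl asg p q b = ((q : ℕ) - (p : ℕ) + 1) + 1 ∧
          2 * P.cntLbl A' p q b = ((q : ℕ) - (p : ℕ) + 1) + 1))) :
    ∃ B' : Fin P.n → Bool, ExtendsPartial A' B' ∧ P.AllInnocent B' := by
  classical
  obtain ⟨B, hBext, hBInn⟩ := hext
  set d : Bool := decide (P.countV B p q < P.countM B p q) with hd
  refine ⟨GreedyAux.comp A' B p q d, fun i b h => GreedyAux.comp_some h, ?_⟩
  have hpq : p ≤ q := hsus.1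
  have hOut : ∀ i, ¬ (p ≤ i ∧ i ≤ q) → GreedyAux.comp A' B p q d i = B i := by
    intro i hi
    cases hA : A' i with
    | none => exact GreedyAux.comp_out hA hi
    | some b =>
      rw [GreedyAux.comp_some hA]
      have : asg i = some b := by rw [← houtside i hi]; exact hA
      exact (hBext i b this).symm
  have hsum : ∀ a : Fin P.n → Bool,
      GreedyAux.cnt a p q true + GreedyAux.cnt a p q false = (q : ℕ) - p + 1 := by
    intro a
    rw [GreedyAux.cnt_add, GreedyAux.card_between hpq]
  have hInnB := hBInn p q hsus
  have hIB1 : (GreedyAux.cnt B p q true : ℤ) - GreedyAux.cnt B p q false ≤ 1 := hInnB.1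
  have hIB2 : (GreedyAux.cnt B p q false : ℤ) - GreedyAux.cnt B p q true ≤ 1 := hInnB.2
  have hMr : GreedyAux.cnt (GreedyAux.comp A' B p q d) p q true
      = P.cntLbl A' p q true + (if d = true then P.cntNone A' p q else 0) :=
    GreedyAux.cnt_comp A' B p q d true
  have hVr : GreedyAux.cnt (GreedyAux.comp A' B p q d) p q false
      = P.cntLbl A' p q false + (if d = false then P.cntNone A' p q else 0) :=
    GreedyAux.cnt_comp A' B p q d false
  have hkeyIn : ∀ b, GreedyAux.cnt (GreedyAux.comp A' B p q d) p q b
      = GreedyAux.cnt B p q b := by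
    have hsB := hsum B
    have hsB' := hsum (GreedyAux.comp A' B p q d)
    obtain ⟨hev, hod⟩ := hbal
    by_cases hE : Even ((q : ℕ) - p + 1)
    · obtain ⟨h0, heq⟩ := hev hE
      rw [h0] at hMr hVr
      simp only [ite_self, add_zero] at hMr hVr
      obtain ⟨m, hm⟩ := hE
      intro b; cases b <;> omega
    · rcases hod hE with ⟨h1, heq⟩ | ⟨h0, b0, hb1, hb2⟩
      · rw [h1] at hMr hVr
        have hodd := Nat.not_even_iff.mp hE
        by_cases hc : P.countV B p q < P.countM B p q
        · have hdt : d = true := by simp [hd, hc]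
          rw [hdt] at hMr hVr hsB' ⊢
          simp at hMr hVr
          have hc' : GreedyAux.cnt B p q false < GreedyAux.cnt B p q true := hc
          intro b; cases b <;> omega
        · have hdt : d = false := by simp [hd, hc]
          rw [hdt] at hMr hVr hsB' ⊢
          simp at hMr hVr
          have hc' : ¬ (GreedyAux.cnt B p q false < GreedyAux.cnt B p q true) := hc
          intro b; cases b <;> omega
      · rw [h0] at hMr hVr
        simp only [ite_self, add_zero] at hMr hVr
        have hle : P.cntLbl asg p q b0 ≤ GreedyAux.cnt B p q b0 := by
          unfold CreasePattern1D.cntLbl GreedyAux.cnt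
          apply Finset.card_le_card
          intro i hi
          simp only [mem_filter, mem_univ, true_and] at hi ⊢
          exact ⟨hi.1, hi.2.1, hBext i b0 hi.2.2⟩
        have hodd := Nat.not_even_iff.mp hE
        intro b; cases b0 <;> cases b <;> omega
  intro p' q' hs'
  have hkey : ∀ b, GreedyAux.cnt (GreedyAux.comp A' B p q d) p' q' b
      = GreedyAux.cnt B p' q' b := by
    by_cases hov : p ≤ q' ∧ p' ≤ q
    · by_cases hcont : p' ≤ p ∧ q ≤ q'
      · intro b
        exact GreedyAux.cnt_local b hOut (hkeyIn b) hcont.1 hcont.2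
      · have hrs : p ⊔ p' ≤ q ⊓ q' := sup_le (le_inf hpq hov.1) (le_inf hov.2 hs'.1)
        have hne : ¬ (p ⊔ p' = p ∧ q ⊓ q' = q) := by
          rintro ⟨h1, h2⟩
          exact hcont ⟨sup_eq_left.mp h1, inf_eq_left.mp h2⟩
        have hsome := hmin _ _ (GreedyAux.susp_inter hsus hs' hrs) le_sup_left inf_le_left hne
        intro b
        apply GreedyAux.cnt_congr
        intro i hip hiq
        by_cases hin : p ≤ i ∧ i ≤ q
        · have h1 : p ⊔ p' ≤ i := sup_le hin.1 hip
          have h2 : i ≤ q ⊓ q' := le_inf hin.2 hiq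
          obtain ⟨bb, hbb⟩ := Option.isSome_iff_exists.mp (hsome i h1 h2)
          rw [GreedyAux.comp_some (hextend i bb hbb), hBext i bb hbb]
        · exact hOut i hin
    · intro b
      apply GreedyAux.cnt_congr
      intro i hip hiq
      apply hOut
      rintro ⟨h1, h2⟩
      exact hov ⟨h1.trans hiq, hip.trans h2⟩
  have hM : P.countM (GreedyAux.comp A' B p q d) p' q' = P.countM B p' q' := hkey true
  have hV : P.countV (GreedyAux.comp A' B p q d) p' q' = P.countV B p' q' := hkey false
  have hI := hBInn p' q' hs'
  exact ⟨by rw [hM, hV]; exact hI.1, by rw [hM, hV]; exact hI.2⟩
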